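/- Let f : ℝ ∪ {∞} → ℤ/2ℤ have a left limit at every point and be left continuous (f(t − 0) = f(t) for all t ∈ ℝ, extended to ∞ by left continuity). Define μ on the ring Sym⁻ generated by symmetric differences of left-closed right-open intervals by μ([[a₁,b₁) Δ ... Δ [[aₙ,bₙ)) = f(a₁) + f(b₁) + ... + f(aₙ) + f(bₙ) (mod 2), where [[a,b) denotes the symmetric interval ([a,b) if a < b, [b,a) if b < a, ∅ if a = b). Then μ is countably additive: for every pairwise disjoint sequence (Aₖ) in Sym⁻ with union in Sym⁻, only finitely many μ(Aₖ) equal 1 and μ(⋃Aₖ) = Σ μ(Aₖ) mod 2. -/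

import Mathlib

/-- A (countably additive) binary measure on a family `U` of subsets of `X`. -/
def IsBinMeasure {X : Type*} (U : Set (Set X)) (μ : Set X → ZMod 2) : Prop :=
  ∀ A : ℕ → Set X, (∀ n, A n ∈ U) → Pairwise (Function.onFun Disjoint A) →
    (⋃ n, A n) ∈ U →
    {n | μ (A n) = 1}.Finite ∧ μ (⋃ n, A n) = ∑ᶠ n, μ (A n)

/-- The symmetric left-closed right-open interval `[[a,b)`. -/
def symIco (a b : ℝ) : Set ℝ := Set.Ico (min a b) (max a b)

/-- The set ring (under symmetric difference and intersection) generated by the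
symmetric intervals `[[a,b)`. -/
inductive SymRing : Set ℝ → Prop
  | base (a b : ℝ) : SymRing (symIco a b)
  | symmDiff {A B : Set ℝ} : SymRing A → SymRing B → SymRing (symmDiff A B)
  | inter {A B : Set ℝ} : SymRing A → SymRing B → SymRing (A ∩ B)

/-!
Every set of the ring is `jumpSet L` for a list `L` of even length, the set of points lying
below an odd number of entries of `L`: symmetric difference and intersection correspond to
concatenation and to the list of pairwise minima, and `μ (jumpSet L)` is the sum of `f` over `L`,
so `μ` is finitely additive. Intersecting with `[c, d)` replaces each entry `u` by the pair
`min u c`, `min u d`, whose `f`-values agree when `f` is constant on `[c, d]`; such intervals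
are therefore null.

Countable additivity then reduces to continuity at `∅`. If `T n` decreases to `∅` in the ring,
left continuity of `f` lets us cut from each `T n`, a finite union of intervals `[a, b)`, short
pieces `[c, b)` on whose closure `f` is constant, leaving a compact set. Finitely many of these
compact sets already have empty intersection, so from some index on `T n` is covered by finitely
many null intervals.
-/

open Set Filter MeasureTheory Function

namespace MeasureTheory.AddContent

variable {α G : Type*} [AddCommMonoid G] {C : Set (Set α)}

theorem support_finite_and_iUnion_eq_finsum (m : AddContent G C) (hC : IsSetRing C)
    (hm : ∀ T : ℕ → Set α, (∀ n, T n ∈ C) → Antitone T → ⋂ n, T n = ∅ →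
      ∀ᶠ n in atTop, m (T n) = 0)
    {A : ℕ → Set α} (hA : ∀ n, A n ∈ C) (hdisj : Pairwise (Disjoint on A))
    (hU : ⋃ n, A n ∈ C) :
    (Function.support fun n ↦ m (A n)).Finite ∧ m (⋃ n, A n) = ∑ᶠ n, m (A n) := by
  set T : ℕ → Set α := fun n ↦ (⋃ n, A n) \ accumulate A n
  have hTC (n : ℕ) : T n ∈ C := hC.sdiff_mem hU (hC.accumulate_mem hA n)
  have hT_anti : Antitone T := fun _ _ h ↦ sdiff_subset_sdiff_right (monotone_accumulate h)
  have hT_empty : ⋂ n, T n = ∅ := by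
    refine eq_empty_of_forall_notMem fun x hx ↦ ?_
    obtain ⟨k, hk⟩ := mem_iUnion.1 (mem_iInter.1 hx 0).1
    exact (mem_iInter.1 hx k).2 (subset_accumulate hk)
  have hU_eq (n : ℕ) : m (⋃ n, A n) = ∑ i ∈ Finset.range (n + 1), m (A i) + m (T n) := by
    rw [← addContent_accumulate m hC hdisj hA, ← addContent_union hC (hC.accumulate_mem hA n)
      (hTC n) disjoint_sdiff_right, union_sdiff_cancel (accumulate_subset_iUnion n)]
  have hT_succ (n : ℕ) : m (T n) = m (A (n + 1)) + m (T (n + 1)) := by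
    have hAT : A (n + 1) ⊆ T n :=
      subset_sdiff.2 ⟨subset_iUnion A _, (disjoint_accumulate hdisj n.lt_succ_self).symm⟩
    have hsplit : T n = A (n + 1) ∪ T (n + 1) := by
      simp only [T, accumulate_succ, ← sdiff_sdiff]
      exact (union_sdiff_cancel hAT).symm
    rw [hsplit, addContent_union hC (hA _) (hTC _)
      (disjoint_sdiff_right.mono_left subset_accumulate)]
  obtain ⟨N, hN⟩ := eventually_atTop.1 (hm T hTC hT_anti hT_empty)
  have hA_zero (n : ℕ) (hn : N ≤ n) : m (A (n + 1)) = 0 := by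
    have h := hT_succ n
    rwa [hN n hn, hN (n + 1) (by omega), add_zero, eq_comm] at h
  have hsupp : (Function.support fun n ↦ m (A n)) ⊆ Finset.range (N + 1) := by
    intro i hi
    by_contra hiN
    rw [Finset.coe_range, mem_Iio, not_lt] at hiN
    obtain ⟨k, rfl⟩ := Nat.exists_eq_add_of_le' hiN
    exact hi (hA_zero (k + N) (Nat.le_add_left N k))
  refine ⟨(Finset.range (N + 1)).finite_toSet.subset hsupp, ?_⟩
  rw [finsum_eq_sum_of_support_subset _ hsupp, hU_eq N, hN N le_rfl, add_zero]

end MeasureTheory.AddContent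

def jumpSet (L : List ℝ) : Set ℝ := {x | Odd (L.countP (x < ·))}

lemma mem_jumpSet {L : List ℝ} {x : ℝ} : x ∈ jumpSet L ↔ Odd (L.countP (x < ·)) := Iff.rfl

lemma List.Perm.jumpSet_eq {L L' : List ℝ} (h : L.Perm L') : jumpSet L = jumpSet L' := by
  ext x; simp only [mem_jumpSet, h.countP_eq]

lemma jumpSet_append (L L' : List ℝ) : jumpSet (L ++ L') = symmDiff (jumpSet L) (jumpSet L') := by
  ext x
  simp only [mem_jumpSet, mem_symmDiff, List.countP_append, Nat.odd_add, ← Nat.not_odd_iff_even]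
  tauto

lemma countP_lt_flatMap_min (L L' : List ℝ) (x : ℝ) :
    (L.flatMap fun u ↦ L'.map (min u)).countP (x < ·) = L.countP (x < ·) * L'.countP (x < ·) := by
  induction L with
  | nil => simp
  | cons u L ih =>
    rw [List.flatMap_cons, List.countP_append, ih, List.countP_map, List.countP_cons]
    by_cases hxu : x < u
    · simp [hxu, Function.comp_def, add_mul, add_comm]
    · simp [hxu, Function.comp_def]

lemma jumpSet_flatMap_min (L L' : List ℝ) :
    jumpSet (L.flatMap fun u ↦ L'.map (min u)) = jumpSet L ∩ jumpSet L' := by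
  ext x; simp only [mem_jumpSet, countP_lt_flatMap_min, Nat.odd_mul, mem_inter_iff]

lemma symIco_eq_jumpSet (a b : ℝ) : symIco a b = jumpSet [a, b] := by
  ext x
  simp only [symIco, mem_Ico, mem_jumpSet, List.countP_cons, List.countP_nil, decide_eq_true_eq]
  rcases le_total a b with h | h <;> by_cases hxa : x < a <;> by_cases hxb : x < b <;>
    simp [h, hxa, hxb, Nat.odd_iff] <;> linarith

def symIcoSum (l : List (ℝ × ℝ)) : Set ℝ := l.foldr (fun p S ↦ symmDiff (symIco p.1 p.2) S) ∅

def pairup : List ℝ → List (ℝ × ℝ)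
  | [] => []
  | [_] => []
  | a :: b :: t => (a, b) :: pairup t

lemma symIcoSum_pairup {L : List ℝ} (hL : Even L.length) : symIcoSum (pairup L) = jumpSet L := by
  induction L using pairup.induct with
  | case1 => simp [symIcoSum, pairup, jumpSet]
  | case2 => simp at hL
  | case3 a b t ih =>
    rw [pairup, symIcoSum, List.foldr_cons, ← symIcoSum, ih (by simpa [parity_simps] using hL),
      symIco_eq_jumpSet, ← jumpSet_append]
    rfl

lemma sum_pairup (f : ℝ → ZMod 2) {L : List ℝ} (hL : Even L.length) :
    ((pairup L).map fun p ↦ f p.1 + f p.2).sum = (L.map f).sum := by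
  induction L using pairup.induct with
  | case1 => rfl
  | case2 => simp at hL
  | case3 a b t ih =>
    simp [pairup, ih (by simpa [parity_simps] using hL), add_assoc]

lemma jumpSet_eq_biUnion_pairup {L : List ℝ} (hsort : L.Pairwise (· ≤ ·)) (hL : Even L.length) :
    jumpSet L = ⋃ p ∈ pairup L, Ico p.1 p.2 := by
  induction L using pairup.induct with
  | case1 => simp [jumpSet, pairup]
  | case2 => simp at hL
  | case3 a b t ih =>
    have ht : Even t.length := by simpa [parity_simps] using hL
    simp only [List.pairwise_cons, List.mem_cons, forall_eq_or_imp] at hsort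
    obtain ⟨⟨hab, hat⟩, hbt, hsort⟩ := hsort
    have hcount : ∀ x < b, t.countP (x < ·) = t.length := fun x hx ↦
      List.countP_eq_length.2 fun y hy ↦ by simpa using hx.trans_le (hbt y hy)
    ext x
    simp only [pairup, List.mem_cons, iUnion_iUnion_eq_or_left, mem_union, ← ih hsort ht,
      mem_jumpSet, List.countP_cons, mem_Ico, decide_eq_true_eq]
    by_cases hxb : x < b
    · rw [hcount x hxb]
      rcases lt_or_ge x a with hxa | hxa
      · simp [hxa, hxb, Nat.odd_add_one, ht]
      · simp [hxa, hxa.not_gt, hxb, ht]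
    · have hxa : ¬x < a := fun hxa ↦ hxb (hxa.trans_le hab)
      simp [hxa, hxb]

namespace SymRing

lemma exists_jumpSet {S : Set ℝ} (hS : SymRing S) :
    ∃ L : List ℝ, Even L.length ∧ S = jumpSet L := by
  induction hS with
  | base a b => exact ⟨[a, b], by simp, symIco_eq_jumpSet a b⟩
  | symmDiff _ _ ihA ihB =>
    obtain ⟨L, hL, rfl⟩ := ihA
    obtain ⟨L', hL', rfl⟩ := ihB
    exact ⟨L ++ L', by simpa using hL.add hL', (jumpSet_append L L').symm⟩
  | inter _ _ ihA ihB =>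
    obtain ⟨L, hL, rfl⟩ := ihA
    obtain ⟨L', hL', rfl⟩ := ihB
    exact ⟨L.flatMap fun u ↦ L'.map (min u), by simpa using hL'.mul_left _,
      (jumpSet_flatMap_min L L').symm⟩

lemma exists_eq_biUnion_Ico {S : Set ℝ} (hS : SymRing S) :
    ∃ P : List (ℝ × ℝ), S = ⋃ p ∈ P, Ico p.1 p.2 := by
  obtain ⟨L, hL, rfl⟩ := hS.exists_jumpSet
  have hperm := L.mergeSort_perm (· ≤ ·)
  refine ⟨pairup (L.mergeSort (· ≤ ·)), ?_⟩
  rw [hperm.symm.jumpSet_eq,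
    jumpSet_eq_biUnion_pairup (L.pairwise_mergeSort' _) (hperm.length_eq ▸ hL)]

end SymRing

lemma symRing_Ico (a b : ℝ) : SymRing (Ico a b) := by
  rcases le_total a b with h | h
  · simpa [symIco, h] using SymRing.base a b
  · simpa [symIco, h] using SymRing.base a a

lemma isSetRing_symRing : IsSetRing {S : Set ℝ | SymRing S} where
  empty_mem := by simpa using symRing_Ico 0 0
  union_mem s t (hs : SymRing s) (ht : SymRing t) := by
    have h : symmDiff (symmDiff s t) (s ∩ t) = s ∪ t := symmDiff_symmDiff_inf s t
    exact h ▸ (hs.symmDiff ht).symmDiff (hs.inter ht)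
  sdiff_mem s t (hs : SymRing s) (ht : SymRing t) := by
    have h : symmDiff s (s ∩ t) = s \ t := by
      rw [symmDiff_of_ge inter_subset_left, sdiff_self_inter]
    exact h ▸ hs.symmDiff (hs.inter ht)

def IsLeftStieltjes (f : ℝ → ZMod 2) (μ : Set ℝ → ZMod 2) : Prop :=
  ∀ l : List (ℝ × ℝ), μ (symIcoSum l) = (l.map fun p ↦ f p.1 + f p.2).sum

namespace IsLeftStieltjes

variable {f : ℝ → ZMod 2} {μ : Set ℝ → ZMod 2}

lemma measure_empty (hμ : IsLeftStieltjes f μ) : μ ∅ = 0 := hμ []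

lemma measure_jumpSet (hμ : IsLeftStieltjes f μ) {L : List ℝ} (hL : Even L.length) :
    μ (jumpSet L) = (L.map f).sum := by
  rw [← symIcoSum_pairup hL, hμ, sum_pairup f hL]

lemma measure_union (hμ : IsLeftStieltjes f μ) {S T : Set ℝ} (hS : SymRing S) (hT : SymRing T)
    (hST : Disjoint S T) : μ (S ∪ T) = μ S + μ T := by
  obtain ⟨L, hL, rfl⟩ := hS.exists_jumpSet
  obtain ⟨L', hL', rfl⟩ := hT.exists_jumpSet
  have hunion : jumpSet L ∪ jumpSet L' = symmDiff (jumpSet L) (jumpSet L') :=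
    hST.symmDiff_eq_sup.symm
  rw [hunion, ← jumpSet_append, hμ.measure_jumpSet hL, hμ.measure_jumpSet hL',
    hμ.measure_jumpSet (by simpa using hL.add hL'), List.map_append, List.sum_append]

lemma measure_inter_Ico_eq_zero (hμ : IsLeftStieltjes f μ) {S : Set ℝ} (hS : SymRing S) {c d : ℝ}
    (hflat : (f '' Icc c d).Subsingleton) : μ (S ∩ Ico c d) = 0 := by
  rcases lt_or_ge d c with hdc | hcd
  · rw [Ico_eq_empty_of_le hdc.le, inter_empty, hμ.measure_empty]
  obtain ⟨L, hL, rfl⟩ := hS.exists_jumpSet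
  have hIco : Ico c d = jumpSet [c, d] := by
    rw [← symIco_eq_jumpSet, symIco, min_eq_left hcd, max_eq_right hcd]
  rw [hIco, ← jumpSet_flatMap_min, hμ.measure_jumpSet (by simp [hL.mul_right 2])]
  have hpair (u : ℝ) : f (min u c) = f (min u d) := by
    rcases lt_or_ge u c with huc | hcu
    · rw [min_eq_left huc.le, min_eq_left (huc.le.trans hcd)]
    · exact hflat (mem_image_of_mem f ⟨le_min hcu le_rfl, (min_le_right u c).trans hcd⟩)
        (mem_image_of_mem f ⟨le_min hcu hcd, min_le_right u d⟩)
  simp [List.flatMap_def, List.sum_flatten, Function.comp_def, hpair, CharTwo.add_self_eq_zero]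

lemma measure_eq_zero_of_subset_biUnion_Ico (hμ : IsLeftStieltjes f μ) {R : List (ℝ × ℝ)}
    (hR : ∀ p ∈ R, (f '' Icc p.1 p.2).Subsingleton) {S : Set ℝ} (hS : SymRing S)
    (hSR : S ⊆ ⋃ p ∈ R, Ico p.1 p.2) : μ S = 0 := by
  induction R generalizing S with
  | nil =>
    rw [show S = ∅ from subset_empty_iff.1 (by simpa using hSR), hμ.measure_empty]
  | cons p R ih =>
    simp only [List.mem_cons, forall_eq_or_imp] at hR
    simp only [List.mem_cons, iUnion_iUnion_eq_or_left] at hSR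
    have hSI := symRing_Ico p.1 p.2
    rw [← inter_union_sdiff S (Ico p.1 p.2),
      hμ.measure_union (hS.inter hSI) (isSetRing_symRing.sdiff_mem hS hSI)
        (disjoint_sdiff_right.mono_left inter_subset_right),
      hμ.measure_inter_Ico_eq_zero hS hR.1,
      ih hR.2 (isSetRing_symRing.sdiff_mem hS hSI) (sdiff_subset_iff.2 hSR), add_zero]

end IsLeftStieltjes

section LeftLimit

variable {f : ℝ → ZMod 2} (hf : ∀ t : ℝ, ∃ t' < t, ∀ s ∈ Ioo t' t, f s = f t)
include hf

lemma exists_mem_Ioo_subsingleton_image_Icc {a b : ℝ} (hab : a < b) :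
    ∃ c ∈ Ioo a b, (f '' Icc c b).Subsingleton := by
  obtain ⟨t', ht', hconst⟩ := hf b
  obtain ⟨c, hc, hcb⟩ := exists_between (max_lt hab ht')
  refine ⟨c, ⟨(le_max_left _ _).trans_lt hc, hcb⟩, (subsingleton_singleton (a := f b)).anti ?_⟩
  rintro _ ⟨x, hx, rfl⟩
  rcases hx.2.eq_or_lt with rfl | hxb
  · rfl
  · exact hconst x ⟨(le_max_right _ _).trans_lt (hc.trans_le hx.1), hxb⟩

lemma exists_Icc_subset_Ico_subset_union (a b : ℝ) :
    ∃ c, Icc a c ⊆ Ico a b ∧ Ico a b ⊆ Icc a c ∪ Ico c b ∧ (f '' Icc c b).Subsingleton := by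
  rcases lt_or_ge a b with hab | hba
  · obtain ⟨c, hc, hflat⟩ := exists_mem_Ioo_subsingleton_image_Icc hf hab
    exact ⟨c, Icc_subset_Ico_right hc.2, (Icc_union_Ico_eq_Ico hc.1.le hc.2).superset, hflat⟩
  · obtain ⟨c, hc, hflat⟩ := exists_mem_Ioo_subsingleton_image_Icc hf (sub_one_lt b)
    rw [Ico_eq_empty_of_le hba]
    exact ⟨c, (Icc_eq_empty (hc.2.trans_le hba).not_ge).subset, empty_subset _, hflat⟩

lemma SymRing.exists_isCompact_subset_union_biUnion_Ico {S : Set ℝ} (hS : SymRing S) :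
    ∃ (K : Set ℝ) (R : List (ℝ × ℝ)), IsCompact K ∧ K ⊆ S ∧ S ⊆ K ∪ ⋃ p ∈ R, Ico p.1 p.2 ∧
      ∀ p ∈ R, (f '' Icc p.1 p.2).Subsingleton := by
  obtain ⟨P, rfl⟩ := hS.exists_eq_biUnion_Ico
  choose c hKI hIK hflat using fun p : ℝ × ℝ ↦ exists_Icc_subset_Ico_subset_union hf p.1 p.2
  refine ⟨⋃ p ∈ P, Icc p.1 (c p), P.map fun p ↦ (c p, p.2),
    P.finite_toSet.isCompact_biUnion fun _ _ ↦ isCompact_Icc, iUnion₂_mono fun p _ ↦ hKI p, ?_,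
    List.forall_mem_map.2 fun p _ ↦ hflat p⟩
  intro x hx
  obtain ⟨p, hp, hxp⟩ := mem_iUnion₂.1 hx
  rcases hIK p hxp with h | h
  · exact Or.inl (mem_iUnion₂.2 ⟨p, hp, h⟩)
  · exact Or.inr (mem_iUnion₂.2 ⟨(c p, p.2), List.mem_map_of_mem hp, h⟩)

lemma IsLeftStieltjes.eventually_measure_eq_zero {μ : Set ℝ → ZMod 2} (hμ : IsLeftStieltjes f μ)
    {T : ℕ → Set ℝ} (hT : ∀ n, SymRing (T n)) (hanti : Antitone T) (hempty : ⋂ n, T n = ∅) :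
    ∀ᶠ n in atTop, μ (T n) = 0 := by
  choose K R hK hKT hTKR hR using fun n ↦ (hT n).exists_isCompact_subset_union_biUnion_Ico hf
  obtain ⟨u, hu⟩ := (hK 0).elim_finite_subfamily_closed K (fun n ↦ (hK n).isClosed)
    (subset_empty_iff.1 (inter_subset_right.trans (hempty ▸ iInter_mono hKT)))
  set N := u.sup id
  refine eventually_atTop.2 ⟨N, fun n hn ↦ hμ.measure_eq_zero_of_subset_biUnion_Ico
    (R := (List.range (N + 1)).flatMap R) ?_ (hT n) fun x hx ↦ ?_⟩
  · intro p hp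
    obtain ⟨k, -, hpk⟩ := List.mem_flatMap.1 hp
    exact hR k p hpk
  by_contra hxR
  have hxK (k : ℕ) (hk : k ≤ N) : x ∈ K k := by
    refine (hTKR k (hanti (hk.trans hn) hx)).resolve_right fun hxk ↦ hxR ?_
    obtain ⟨p, hp, hxp⟩ := mem_iUnion₂.1 hxk
    exact mem_iUnion₂.2 ⟨p, List.mem_flatMap.2 ⟨k, List.mem_range.2 (by omega), hp⟩, hxp⟩
  have hxu : x ∈ K 0 ∩ ⋂ i ∈ u, K i :=
    ⟨hxK 0 N.zero_le, mem_iInter₂.2 fun i hi ↦ hxK i (Finset.le_sup (f := id) hi)⟩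
  exact hu.subset hxu

end LeftLimit

theorem stmt_17 (f : ℝ → ZMod 2)
    (hf : ∀ t : ℝ, ∃ t' < t, ∀ s ∈ Set.Ioo t' t, f s = f t)
    (μ : Set ℝ → ZMod 2)
    (hμ : ∀ l : List (ℝ × ℝ),
      μ (l.foldr (fun p S => symmDiff (symIco p.1 p.2) S) ∅) =
        (l.map (fun p => f p.1 + f p.2)).sum) :
    IsBinMeasure {A | SymRing A} μ := by
  have hμ' : IsLeftStieltjes f μ := hμ
  intro A hA hdisj hU
  let m := isSetRing_symRing.addContent_of_union μ hμ'.measure_empty hμ'.measure_union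
  obtain ⟨hfin, hsum⟩ := m.support_finite_and_iUnion_eq_finsum isSetRing_symRing
    (fun _ hT hanti hempty ↦ hμ'.eventually_measure_eq_zero hf hT hanti hempty) hA hdisj hU
  exact ⟨hfin.subset fun n (hn : μ (A n) = 1) ↦ (hn ▸ one_ne_zero : μ (A n) ≠ 0), hsum⟩
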